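/- arXiv:2311.13167 — 5 statements merged into one kernel-verified Lean document; each statement's English description precedes it below -/
import Mathlib

section
/- Let f : ℝ^n × ℝ^m → ℝ and g : ℝ^n × ℝ^m → ℝ^p be continuous. Assume that for every x ∈ ℝ^n the function u ↦ f(x,u) is strictly convex, each component u ↦ g_i(x,u) is convex, and the problem P(x) has a minimizer (hence a unique minimizer u*(x)). Then, for any x₀ ∈ ℝ^n, the map u* is locally bounded at x₀ if and only if local compact feasibility holds at x₀. -/
open Set Filter Topology

/-! Suppose local compact feasibility holds at `x₀` but `u*` is unbounded near `x₀`. Pick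
feasible points `v(x) ∈ K` of `P(x)`. By convexity, every point of the segment from `v(x)` to
`u*(x)` is feasible for `P(x)` and no worse than `v(x)`. Along an ultrafilter converging to `x₀`
on which `‖u*(x)‖ → ∞`, the points `v(x)` and the unit directions from `v(x)` to `u*(x)` converge
in the compact set `K × sphere 0 1`, and continuity turns the lengthening segments into a ray
`a + t d`, `d ≠ 0`, of feasible points of `P(x₀)` on which `f(x₀, ·)` stays below `f(x₀, a)`.
A convex continuous function bounded above on a ray does not increase along parallel rays, so the
ray can be moved to start at `u*(x₀)`; its points are then feasible and no worse than the minimizer,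
contradicting strict convexity. The converse is immediate: `K` can be a ball containing `u*`. -/

def Feasible {ι E F : Type*} (g : ι → E × F → ℝ) (x : E) (u : F) : Prop :=
  ∀ i, g i (x, u) ≤ 0

def IsConstrainedMin {ι E F : Type*} (f : E × F → ℝ) (g : ι → E × F → ℝ) (x : E) (u : F) :
    Prop :=
  Feasible g x u ∧ ∀ v, Feasible g x v → f (x, u) ≤ f (x, v)

theorem Filter.neBot_nhds_inf_comap_atTop {X : Type*} [TopologicalSpace X] {φ : X → ℝ} {x₀ : X}
    (h : ¬ ∃ U ∈ 𝓝 x₀, ∃ B : ℝ, 0 < B ∧ ∀ x ∈ U, φ x ≤ B) :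
    (𝓝 x₀ ⊓ comap φ atTop).NeBot := by
  rw [((𝓝 x₀).basis_sets.inf (atTop_basis.comap φ)).neBot_iff]
  rintro ⟨U, B⟩ ⟨hU, -⟩
  by_contra hempty
  refine h ⟨U, hU, max B 1, by positivity, fun x hx => ?_⟩
  have : φ x < B := not_le.mp fun hB => hempty ⟨x, hx, hB⟩
  exact this.le.trans (le_max_left _ _)

section Convexity

variable {F : Type*} [NormedAddCommGroup F] [NormedSpace ℝ F]

theorem add_smul_normalize_mem_segment {u w : F} {t : ℝ} (ht₀ : 0 ≤ t) (ht : t ≤ ‖w - u‖) :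
    u + t • (‖w - u‖⁻¹ • (w - u)) ∈ segment ℝ u w := by
  rw [segment_eq_image']
  exact ⟨t * ‖w - u‖⁻¹, ⟨by positivity, mul_inv_le_one_of_le₀ ht (norm_nonneg _)⟩,
    by rw [smul_smul]⟩

/-- `b + t • d` is the limit of `(1 - s) • b + s • (a + (t / s) • d)` as `s → 0⁺`. -/
theorem ConvexOn.map_add_smul_le_of_bddAbove_ray {h : F → ℝ} (hconv : ConvexOn ℝ univ h)
    (hcont : Continuous h) {a d : F} {M : ℝ} (hray : ∀ t : ℝ, 0 ≤ t → h (a + t • d) ≤ M) (b : F)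
    {t : ℝ} (ht : 0 ≤ t) : h (b + t • d) ≤ h b := by
  have hle : ∀ᶠ s in 𝓝[>] (0 : ℝ), h (b + t • d + s • (a - b)) ≤ (1 - s) * h b + s * M := by
    filter_upwards [Ioo_mem_nhdsGT one_pos] with s ⟨hs₀, hs₁⟩
    calc h (b + t • d + s • (a - b)) = h ((1 - s) • b + s • (a + (t / s) • d)) := by
          rw [smul_add _ a, smul_smul, mul_div_cancel₀ t hs₀.ne']
          congr 1
          module
      _ ≤ (1 - s) * h b + s * h (a + (t / s) • d) :=
          hconv.2 (mem_univ _) (mem_univ _) (by linarith) hs₀.le (by ring)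
      _ ≤ (1 - s) * h b + s * M := by gcongr; exact hray _ (div_nonneg ht hs₀.le)
  have hlhs : Tendsto (fun s : ℝ => h (b + t • d + s • (a - b))) (𝓝[>] 0) (𝓝 (h (b + t • d))) := by
    have := ((by fun_prop : Continuous fun s : ℝ => h (b + t • d + s • (a - b))).tendsto 0)
    simpa using this.mono_left nhdsWithin_le_nhds
  have hrhs : Tendsto (fun s : ℝ => (1 - s) * h b + s * M) (𝓝[>] 0) (𝓝 (h b)) := by
    have := ((by fun_prop : Continuous fun s : ℝ => (1 - s) * h b + s * M).tendsto 0)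
    simpa using this.mono_left nhdsWithin_le_nhds
  exact le_of_tendsto_of_tendsto hlhs hrhs hle

end Convexity

section ParametricProgram

variable {ι α E F : Type*} [NormedAddCommGroup F] [NormedSpace ℝ F]

theorem le_of_tendsto_segment_directions [TopologicalSpace E] {h : E × F → ℝ}
    (hh : Continuous h) (hconv : ∀ x, ConvexOn ℝ univ fun u => h (x, u)) {l : Filter α} [l.NeBot]
    {x : α → E} {u w : α → F} {c : α → ℝ} {x₀ : E} {a d : F} {c₀ : ℝ}
    (hx : Tendsto x l (𝓝 x₀)) (hu : Tendsto u l (𝓝 a)) (hc : Tendsto c l (𝓝 c₀))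
    (hdist : Tendsto (fun k => ‖w k - u k‖) l atTop)
    (hd : Tendsto (fun k => ‖w k - u k‖⁻¹ • (w k - u k)) l (𝓝 d))
    (hle : ∀ᶠ k in l, max (h (x k, u k)) (h (x k, w k)) ≤ c k) {t : ℝ} (ht : 0 ≤ t) :
    h (x₀, a + t • d) ≤ c₀ := by
  have hlim : Tendsto (fun k => h (x k, u k + t • (‖w k - u k‖⁻¹ • (w k - u k)))) l
      (𝓝 (h (x₀, a + t • d))) :=
    (hh.tendsto _).comp (hx.prodMk_nhds (hu.add (hd.const_smul t)))
  refine le_of_tendsto_of_tendsto hlim hc ?_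
  filter_upwards [hle, hdist.eventually_ge_atTop t] with k hk htk
  exact ((hconv (x k)).le_on_segment (mem_univ _) (mem_univ _)
    (add_smul_normalize_mem_segment ht htk)).trans hk

theorem exists_descent_ray_of_unbounded [SeminormedAddCommGroup E] [ProperSpace F]
    {f : E × F → ℝ} {g : ι → E × F → ℝ} (hf : Continuous f) (hg : ∀ i, Continuous (g i))
    (hfconv : ∀ x, ConvexOn ℝ univ fun u => f (x, u))
    (hgconv : ∀ x i, ConvexOn ℝ univ fun u => g i (x, u))
    {ustar : E → F} (hmin : ∀ x, IsConstrainedMin f g x (ustar x)) {x₀ : E} {K : Set F}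
    (hK : IsCompact K) (hfeas : ∀ᶠ y in 𝓝 x₀, ∃ v ∈ K, Feasible g y v)
    (hunb : (𝓝 x₀ ⊓ comap (fun x => ‖ustar x‖) atTop).NeBot) :
    ∃ a, ∃ d ≠ 0, ∀ t : ℝ, 0 ≤ t → Feasible g x₀ (a + t • d) ∧ f (x₀, a + t • d) ≤ f (x₀, a) := by
  set 𝒰 := Ultrafilter.of (𝓝 x₀ ⊓ comap (fun x => ‖ustar x‖) atTop)
  have h𝒰 : (𝒰 : Filter E) ≤ _ := Ultrafilter.of_le _
  have hx : Tendsto id 𝒰 (𝓝 x₀) := tendsto_id'.mpr (h𝒰.trans inf_le_left)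
  have hnorm : Tendsto (fun x => ‖ustar x‖) 𝒰 atTop :=
    tendsto_comap.mono_left (h𝒰.trans inf_le_right)
  choose! v hvK hvfeas using fun y (hy : ∃ v ∈ K, Feasible g y v) => hy
  have hv : ∀ᶠ y in 𝒰, v y ∈ K ∧ Feasible g y (v y) :=
    hx (hfeas.mono fun y hy => ⟨hvK y hy, hvfeas y hy⟩)
  obtain ⟨R, hR⟩ := hK.isBounded.exists_norm_le
  have hdist : Tendsto (fun y => ‖ustar y - v y‖) 𝒰 atTop := by
    refine tendsto_atTop_mono' _ ?_ (tendsto_atTop_add_const_right _ (-R) hnorm)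
    filter_upwards [hv] with y hy
    linarith [norm_sub_norm_le (ustar y) (v y), hR _ hy.1]
  set dir := fun y => ‖ustar y - v y‖⁻¹ • (ustar y - v y)
  have hmem : ∀ᶠ y in 𝒰, (v y, dir y) ∈ K ×ˢ Metric.sphere 0 1 := by
    filter_upwards [hv, hdist.eventually_gt_atTop 0] with y hy hpos
    exact ⟨hy.1, mem_sphere_zero_iff_norm.mpr (norm_smul_inv_norm (norm_pos_iff.mp hpos))⟩
  obtain ⟨⟨a, d⟩, ⟨-, hd⟩, hlim⟩ := (hK.prod (isCompact_sphere 0 1)).ultrafilter_le_nhds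
    (𝒰.map fun y => (v y, dir y)) (le_principal_iff.mpr hmem)
  have hva : Tendsto v 𝒰 (𝓝 a) := (continuous_fst.tendsto _).comp hlim
  have hdird : Tendsto dir 𝒰 (𝓝 d) := (continuous_snd.tendsto _).comp hlim
  refine ⟨a, d, ne_zero_of_mem_sphere one_ne_zero ⟨d, hd⟩, fun t ht => ⟨fun i => ?_, ?_⟩⟩
  · exact le_of_tendsto_segment_directions (hg i) (fun x => hgconv x i) hx hva tendsto_const_nhds
      hdist hdird (hv.mono fun y hy => max_le (hy.2 i) ((hmin y).1 i)) ht
  · exact le_of_tendsto_segment_directions hf hfconv hx hva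
      ((hf.tendsto _).comp (hx.prodMk_nhds hva)) hdist hdird
      (hv.mono fun y hy => max_le le_rfl ((hmin y).2 _ hy.2)) ht

theorem not_isConstrainedMin_of_descent_ray {f : E × F → ℝ} {g : ι → E × F → ℝ} {x : E}
    (hf : Continuous fun u => f (x, u)) (hg : ∀ i, Continuous fun u => g i (x, u))
    (hstrict : StrictConvexOn ℝ univ fun u => f (x, u))
    (hgconv : ∀ i, ConvexOn ℝ univ fun u => g i (x, u)) {a d : F} (hd : d ≠ 0)
    (hray : ∀ t : ℝ, 0 ≤ t → Feasible g x (a + t • d) ∧ f (x, a + t • d) ≤ f (x, a)) (b : F) :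
    ¬ IsConstrainedMin f g x b := by
  rintro ⟨hbfeas, hbmin⟩
  have hfeas_half : Feasible g x (b + (1 / 2 : ℝ) • d) := fun i =>
    ((hgconv i).map_add_smul_le_of_bddAbove_ray (hg i) (fun t ht => (hray t ht).1 i) b
      (by norm_num)).trans (hbfeas i)
  have hf_one : f (x, b + (1 : ℝ) • d) ≤ f (x, b) :=
    hstrict.convexOn.map_add_smul_le_of_bddAbove_ray hf (fun t ht => (hray t ht).2) b zero_le_one
  have hmid := hstrict.2 (mem_univ b) (mem_univ (b + (1 : ℝ) • d)) (by simpa using hd)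
    (by norm_num : (0 : ℝ) < 1 / 2) (by norm_num : (0 : ℝ) < 1 / 2) (by norm_num)
  have hmid_eq : (1 / 2 : ℝ) • b + (1 / 2 : ℝ) • (b + (1 : ℝ) • d) = b + (1 / 2 : ℝ) • d := by
    module
  simp only [hmid_eq, smul_eq_mul] at hmid
  linarith [hbmin _ hfeas_half]

end ParametricProgram

/-- For continuous problem data with `f(x,·)` strictly convex, each
`g_i(x,·)` convex, and a (unique) minimizer `u*(x)` of `P(x)` for every `x`, the map
`u*` is locally bounded at `x₀` if and only if local compact feasibility holds at `x₀`. -/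
theorem stmt_4 {n m p : ℕ}
    (f : EuclideanSpace ℝ (Fin n) × EuclideanSpace ℝ (Fin m) → ℝ)
    (g : EuclideanSpace ℝ (Fin n) × EuclideanSpace ℝ (Fin m) → EuclideanSpace ℝ (Fin p))
    (ustar : EuclideanSpace ℝ (Fin n) → EuclideanSpace ℝ (Fin m))
    (hf : Continuous f) (hg : Continuous g)
    (hstrict : ∀ x, StrictConvexOn ℝ univ fun u => f (x, u))
    (hgconv : ∀ x (i : Fin p), ConvexOn ℝ univ fun u => g (x, u) i)
    (hmin : ∀ x, (∀ i, g (x, ustar x) i ≤ 0) ∧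
      ∀ u, (∀ i, g (x, u) i ≤ 0) → f (x, ustar x) ≤ f (x, u))
    (x₀ : EuclideanSpace ℝ (Fin n)) :
    (∃ U ∈ nhds x₀, ∃ B : ℝ, 0 < B ∧ ∀ x ∈ U, ‖ustar x‖ ≤ B) ↔
    (∃ K : Set (EuclideanSpace ℝ (Fin m)), IsCompact K ∧ ∃ δ : ℝ, 0 < δ ∧
      ∀ y : EuclideanSpace ℝ (Fin n), ‖y - x₀‖ < δ → ∃ u ∈ K, ∀ i, g (y, u) i ≤ 0) := by
  have hgi : ∀ i, Continuous fun z => g z i := fun i => (PiLp.continuous_apply 2 _ i).comp hg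
  constructor
  · rintro ⟨U, hU, B, -, hbd⟩
    obtain ⟨δ, hδ, hball⟩ := Metric.mem_nhds_iff.mp hU
    refine ⟨Metric.closedBall 0 B, isCompact_closedBall 0 B, δ, hδ, fun y hy =>
      ⟨ustar y, ?_, (hmin y).1⟩⟩
    simpa using hbd y (hball (mem_ball_iff_norm.mpr hy))
  · rintro ⟨K, hK, δ, hδ, hfeas⟩
    by_contra hunb
    have hfeas_near : ∀ᶠ y in 𝓝 x₀, ∃ u ∈ K, Feasible (fun i z => g z i) y u := by
      filter_upwards [Metric.ball_mem_nhds x₀ hδ] with y hy using hfeas y (mem_ball_iff_norm.mp hy)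
    obtain ⟨a, d, hd, hray⟩ := exists_descent_ray_of_unbounded hf hgi
      (fun x => (hstrict x).convexOn) hgconv hmin hK hfeas_near
      (Filter.neBot_nhds_inf_comap_atTop hunb)
    exact not_isConstrainedMin_of_descent_ray (hf.comp (Continuous.prodMk_right x₀))
      (fun i => (hgi i).comp (Continuous.prodMk_right x₀)) (hstrict x₀) (hgconv x₀) hd hray
      (ustar x₀) (hmin x₀)
end

section
/- Let f : ℝ^n × ℝ^m → ℝ and g : ℝ^n × ℝ^m → ℝ^p be continuous. Assume that for every x ∈ ℝ^n the function u ↦ f(x,u) is strictly convex, each component u ↦ g_i(x,u) is convex, the problem P(x) has a minimizer (hence a unique minimizer u*(x)), and local compact feasibility holds at x. Then the map u* : ℝ^n → ℝ^m is (Borel) measurable. -/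
/-!
Penalty method. Write `pen(x,u) = ∑ᵢ gᵢ(x,u)⁺`. For each `k` the penalized objective
`f(x,·) + k·pen(x,·)` is continuous in `u` and measurable in `x`, so scanning a dense sequence
of `ℝ^m` yields a measurable `1/(k+1)`-minimizer `v_k(x)`. Strict convexity makes `u*(x)` the
unique feasible minimizer, and compactness of spheres together with convexity along segments forces
every such sequence of near-minimizers to converge to `u*(x)`; a pointwise limit of measurable
maps is measurable.
-/

open Set Filter Topology Metric

theorem convexOn_finset_sum {E ι : Type*} [AddCommMonoid E] [Module ℝ E] {s : Set E}
    (hs : Convex ℝ s) (t : Finset ι) {φ : ι → E → ℝ} (hφ : ∀ i ∈ t, ConvexOn ℝ s (φ i)) :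
    ConvexOn ℝ s fun u => ∑ i ∈ t, φ i u := by
  classical
  induction t using Finset.induction_on with
  | empty => simpa using convexOn_const (0 : ℝ) hs
  | insert i t hi ih =>
    simp only [Finset.sum_insert hi]
    exact (hφ i (Finset.mem_insert_self i t)).add
      (ih fun j hj => hφ j (Finset.mem_insert_of_mem hj))

section Penalty

variable {E : Type*} [NormedAddCommGroup E] [NormedSpace ℝ E] [ProperSpace E]
  {f pen : E → ℝ} {w : E}

theorem exists_penalized_gt_on_sphere (hf : Continuous f) (hpen : Continuous pen)
    (hfc : StrictConvexOn ℝ univ f) (hpc : ConvexOn ℝ univ pen) (hpen0 : ∀ u, 0 ≤ pen u)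
    (hw : pen w ≤ 0) (hmin : IsMinOn f {u | pen u ≤ 0} w) {ρ : ℝ} (hρ : ρ ≠ 0) :
    ∃ Λ : ℕ, ∃ η > 0, ∀ u ∈ sphere w ρ, f w + η ≤ f u + Λ * pen u := by
  have hS : Convex ℝ {u | pen u ≤ 0} := by simpa using hpc.convex_le 0
  have hunique : ∀ u, pen u ≤ 0 → u ≠ w → f w < f u := fun u hu hne =>
    (hmin hu).lt_of_ne fun h => hne <|
      (hfc.subset (subset_univ _) hS).eq_of_isMinOn (fun v hv => h ▸ hmin hv) hmin hu hw
  let U : ℕ → Set E := fun N => {u | f w < f u + N * pen u}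
  have hcover : sphere w ρ ⊆ ⋃ N, U N := by
    intro u hu
    have hne : u ≠ w := ne_of_mem_sphere hu hρ
    rcases le_or_gt (pen u) 0 with hu0 | hu0
    · exact mem_iUnion.2 ⟨0, by simpa [U] using hunique u hu0 hne⟩
    · obtain ⟨N, hN⟩ := exists_nat_gt ((f w - f u) / pen u)
      refine mem_iUnion.2 ⟨N, ?_⟩
      have := (div_lt_iff₀ hu0).1 hN
      show f w < f u + N * pen u
      linarith
  have hmono : Monotone U := fun i j hij u (hu : f w < f u + i * pen u) => by
    have : (i : ℝ) * pen u ≤ j * pen u := by gcongr; exact hpen0 u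
    show f w < f u + j * pen u
    linarith
  obtain ⟨Λ, hΛ⟩ := (isCompact_sphere w ρ).elim_directed_cover U
    (fun N => isOpen_lt continuous_const (by fun_prop)) hcover hmono.directed_le
  obtain ⟨a, ha, hle⟩ := (isCompact_sphere w ρ).exists_forall_le'
    (f := fun u => f u + Λ * pen u) (by fun_prop) hΛ
  exact ⟨Λ, a - f w, by linarith, fun u hu => by linarith [hle u hu]⟩

theorem tendsto_of_penalized_lt (hf : Continuous f) (hpen : Continuous pen)
    (hfc : StrictConvexOn ℝ univ f) (hpc : ConvexOn ℝ univ pen) (hpen0 : ∀ u, 0 ≤ pen u)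
    (hw : pen w ≤ 0) (hmin : IsMinOn f {u | pen u ≤ 0} w)
    {ι : Type*} {l : Filter ι} {c : ι → ℝ} (hc : Tendsto c l atTop) {v : ι → E}
    (hv : ∀ η > 0, ∀ᶠ k in l, f (v k) + c k * pen (v k) < f w + η) :
    Tendsto v l (𝓝 w) := by
  refine Metric.tendsto_nhds.2 fun ρ hρ => ?_
  obtain ⟨Λ, η, hη, hΛ⟩ :=
    exists_penalized_gt_on_sphere hf hpen hfc hpc hpen0 hw hmin hρ.ne'
  filter_upwards [hv η hη, hc.eventually_ge_atTop Λ] with k hk hkΛ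
  rw [dist_eq_norm]
  by_contra! hfar
  have hck : 0 ≤ c k := (Nat.cast_nonneg Λ).trans hkΛ
  set t := ρ / ‖v k - w‖ with ht
  have hdist : 0 < ‖v k - w‖ := hρ.trans_le hfar
  have ht0 : 0 < t := div_pos hρ hdist
  have ht1 : t ≤ 1 := (div_le_one hdist).2 hfar
  have hsphere : (1 - t) • w + t • v k ∈ sphere w ρ := by
    rw [mem_sphere_iff_norm, show (1 - t) • w + t • v k - w = t • (v k - w) by module,
      norm_smul, Real.norm_of_nonneg ht0.le, ht, div_mul_cancel₀ _ hdist.ne']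
  have hconv : ConvexOn ℝ univ fun u => f u + c k * pen u := hfc.convexOn.add (hpc.smul hck)
  have hpw : c k * pen w ≤ 0 := mul_nonpos_of_nonneg_of_nonpos hck hw
  -- The point of `[w, v k]` on the sphere of radius `ρ` has penalized value at least `f w + η`,
  -- while convexity bounds it by `(1 - t) f w + t (f w + η)` with `0 < t ≤ 1`.
  refine lt_irrefl (f w + η) ?_
  calc f w + η
      ≤ f ((1 - t) • w + t • v k) + Λ * pen ((1 - t) • w + t • v k) := hΛ _ hsphere
    _ ≤ f ((1 - t) • w + t • v k) + c k * pen ((1 - t) • w + t • v k) := by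
        gcongr; exact hpen0 _
    _ ≤ (1 - t) * (f w + c k * pen w) + t * (f (v k) + c k * pen (v k)) :=
        hconv.2 (mem_univ _) (mem_univ _) (by linarith) ht0.le (by ring)
    _ < (1 - t) * f w + t * (f w + η) :=
        add_lt_add_of_le_of_lt
          (mul_le_mul_of_nonneg_left (add_le_of_nonpos_right hpw) (sub_nonneg.2 ht1))
          (mul_lt_mul_of_pos_left hk ht0)
    _ ≤ f w + η := by linarith [mul_le_of_le_one_left hη.le ht1]

end Penalty

theorem exists_measurable_forall_le_add {X E : Type*} [MeasurableSpace X] [TopologicalSpace E]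
    [TopologicalSpace.SeparableSpace E] [Nonempty E] [MeasurableSpace E] {φ : X → E → ℝ}
    (hφm : ∀ u, Measurable fun x => φ x u) (hφc : ∀ x, Continuous (φ x))
    (hbdd : ∀ x, BddBelow (range (φ x))) {ε : ℝ} (hε : 0 < ε) :
    ∃ v : X → E, Measurable v ∧ ∀ x u, φ x (v x) ≤ φ x u + ε := by
  let s := TopologicalSpace.denseSeq E
  have hex : ∀ x, ∃ i, ∀ j, φ x (s i) ≤ φ x (s j) + ε := fun x => by
    have hb : BddBelow (range fun j => φ x (s j)) := (hbdd x).mono (range_comp_subset_range _ _)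
    obtain ⟨i, hi⟩ := exists_lt_of_ciInf_lt (lt_add_of_pos_right (⨅ j, φ x (s j)) hε)
    exact ⟨i, fun j => hi.le.trans (add_le_add_left (ciInf_le hb j) ε)⟩
  classical
  refine ⟨fun x => s (Nat.find (hex x)),
    Measurable.find (f := fun i _ => s i) (p := fun i x => ∀ j, φ x (s i) ≤ φ x (s j) + ε)
      (fun _ => measurable_const) (fun i => ?_) hex,
    fun x u => ?_⟩
  · simp only [ofPred_forall]
    exact MeasurableSet.iInter fun j => measurableSet_le (hφm _) ((hφm _).add_const ε)
  · exact (TopologicalSpace.denseRange_denseSeq E).induction_on u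
      (isClosed_le continuous_const ((hφc x).add continuous_const)) (Nat.find_spec (hex x))

theorem measurable_of_isMinOn_penalty {X E : Type*} [MeasurableSpace X] [NormedAddCommGroup E]
    [NormedSpace ℝ E] [ProperSpace E] [MeasurableSpace E] [BorelSpace E] {f pen : X → E → ℝ}
    (hfm : ∀ u, Measurable fun x => f x u) (hpm : ∀ u, Measurable fun x => pen x u)
    (hfc : ∀ x, Continuous (f x)) (hpc : ∀ x, Continuous (pen x))
    (hfconv : ∀ x, StrictConvexOn ℝ univ (f x)) (hpconv : ∀ x, ConvexOn ℝ univ (pen x))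
    (hpen0 : ∀ x u, 0 ≤ pen x u) {w : X → E} (hw : ∀ x, pen x (w x) ≤ 0)
    (hmin : ∀ x, IsMinOn (f x) {u | pen x u ≤ 0} (w x)) : Measurable w := by
  -- Clamping at `-k` bounds `Φ k x` below, yet `Φ k x (w x) ≤ f x (w x)` once `-k ≤ f x (w x)`.
  let Φ : ℕ → X → E → ℝ := fun k x u => max (f x u + k * pen x u) (-k)
  have hsel : ∀ k : ℕ, ∃ v : X → E, Measurable v ∧ ∀ x u, Φ k x (v x) ≤ Φ k x u + 1 / (k + 1) :=
    fun k => exists_measurable_forall_le_add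
      (fun u => ((hfm u).add (measurable_const.mul (hpm u))).max measurable_const)
      (fun x => by fun_prop) (fun x => ⟨-k, forall_mem_range.2 fun _ => le_max_right _ _⟩)
      Nat.one_div_pos_of_nat
  choose v hvm hv using hsel
  refine measurable_of_tendsto_metrizable hvm (tendsto_pi_nhds.2 fun x => ?_)
  refine tendsto_of_penalized_lt (hfc x) (hpc x) (hfconv x) (hpconv x) (hpen0 x) (hw x) (hmin x)
    tendsto_natCast_atTop_atTop fun η hη => ?_
  filter_upwards [tendsto_natCast_atTop_atTop.eventually_ge_atTop (-f x (w x)),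
    tendsto_one_div_add_atTop_nhds_zero_nat.eventually (gt_mem_nhds hη)] with k hk hkη
  have hΦw : Φ k x (w x) ≤ f x (w x) :=
    max_le (add_le_of_nonpos_right (mul_nonpos_of_nonneg_of_nonpos k.cast_nonneg (hw x)))
      (neg_le.1 hk)
  calc f x (v k x) + k * pen x (v k x) ≤ Φ k x (v k x) := le_max_left _ _
    _ ≤ Φ k x (w x) + 1 / (k + 1) := hv k x (w x)
    _ < f x (w x) + η := add_lt_add_of_le_of_lt hΦw hkη

theorem stmt_5_general {n m p : ℕ}
    (f : EuclideanSpace ℝ (Fin n) × EuclideanSpace ℝ (Fin m) → ℝ)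
    (g : EuclideanSpace ℝ (Fin n) × EuclideanSpace ℝ (Fin m) → EuclideanSpace ℝ (Fin p))
    (ustar : EuclideanSpace ℝ (Fin n) → EuclideanSpace ℝ (Fin m))
    (hf : Continuous f) (hg : Continuous g)
    (hstrict : ∀ x, StrictConvexOn ℝ univ fun u => f (x, u))
    (hgconv : ∀ x (i : Fin p), ConvexOn ℝ univ fun u => g (x, u) i)
    (hmin : ∀ x, (∀ i, g (x, ustar x) i ≤ 0) ∧
      ∀ u, (∀ i, g (x, u) i ≤ 0) → f (x, ustar x) ≤ f (x, u)) :
    Measurable ustar := by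
  let pen : EuclideanSpace ℝ (Fin n) → EuclideanSpace ℝ (Fin m) → ℝ :=
    fun x u => ∑ i, (g (x, u) i)⁺
  have hpen : Continuous fun z : _ × _ => pen z.1 z.2 := by
    simp only [pen, posPart_def]; fun_prop
  have hpen0 : ∀ x u, 0 ≤ pen x u := fun x u => Finset.sum_nonneg fun i _ => posPart_nonneg _
  have hfeas : ∀ x u, pen x u ≤ 0 ↔ ∀ i, g (x, u) i ≤ 0 := fun x u => by
    rw [(hpen0 x u).ge_iff_eq', Finset.sum_eq_zero_iff_of_nonneg fun i _ => posPart_nonneg _]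
    simp
  refine measurable_of_isMinOn_penalty (f := fun x u => f (x, u)) (pen := pen)
    (fun u => (hf.comp (.prodMk_left u)).measurable)
    (fun u => (hpen.comp (.prodMk_left u)).measurable)
    (fun x => hf.comp (.prodMk_right x)) (fun x => hpen.comp (.prodMk_right x)) hstrict
    (fun x => convexOn_finset_sum convex_univ _ fun i _ =>
      (hgconv x i).sup (convexOn_const 0 convex_univ))
    hpen0 (fun x => (hfeas x _).2 (hmin x).1) fun x u hu => (hmin x).2 u ((hfeas x u).1 hu)

/-- For continuous problem data with `f(x,·)` strictly convex, each
`g_i(x,·)` convex, a (unique) minimizer `u*(x)` of `P(x)` for every `x`, and local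
compact feasibility holding at every `x`, the map `u*` is Borel measurable. -/
theorem stmt_5 {n m p : ℕ}
    (f : EuclideanSpace ℝ (Fin n) × EuclideanSpace ℝ (Fin m) → ℝ)
    (g : EuclideanSpace ℝ (Fin n) × EuclideanSpace ℝ (Fin m) → EuclideanSpace ℝ (Fin p))
    (ustar : EuclideanSpace ℝ (Fin n) → EuclideanSpace ℝ (Fin m))
    (hf : Continuous f) (hg : Continuous g)
    (hstrict : ∀ x, StrictConvexOn ℝ univ fun u => f (x, u))
    (hgconv : ∀ x (i : Fin p), ConvexOn ℝ univ fun u => g (x, u) i)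
    (hmin : ∀ x, (∀ i, g (x, ustar x) i ≤ 0) ∧
      ∀ u, (∀ i, g (x, u) i ≤ 0) → f (x, ustar x) ≤ f (x, u))
    (hLCF : ∀ x : EuclideanSpace ℝ (Fin n),
      ∃ K : Set (EuclideanSpace ℝ (Fin m)), IsCompact K ∧ ∃ δ : ℝ, 0 < δ ∧
        ∀ y : EuclideanSpace ℝ (Fin n), ‖y - x‖ < δ → ∃ u ∈ K, ∀ i, g (y, u) i ≤ 0) :
    Measurable ustar :=
  stmt_5_general f g ustar hf hg hstrict hgconv hmin
end

section
/- Let f : ℝ^n × ℝ^m → ℝ and g : ℝ^n × ℝ^m → ℝ^p be continuous, such that for every x the maps u ↦ f(x,u) and u ↦ g(x,u) are twice continuously differentiable and the partial derivatives in u up to order two of f and g are continuous jointly in (x,u). Assume that for every x ∈ ℝ^n the function u ↦ f(x,u) is strictly convex, each component u ↦ g_i(x,u) is convex, and the problem P(x) has a minimizer (hence a unique minimizer u*(x)). Suppose Slater's condition holds at x₀ ∈ ℝ^n, and let F : ℝ^n × ℝ^m → ℝ^n be locally Lipschitz. Then there exists δ₀ > 0 and a differentiable curve x : (−δ₀, δ₀)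 → ℝ^n with x(0) = x₀ such that x'(t) = F(x(t), u*(x(t))) for all t ∈ (−δ₀, δ₀). -/
/-!
Near `x₀` the Slater point `û` stays strictly feasible, and this makes the minimizer `u*`
continuous there. Indeed, fix `ε > 0` and a strictly feasible `v` close to `u*(x₀)` that beats
every point of the sphere `‖u - u*(x₀)‖ = ε` feasible at `x₀` (possible by uniqueness of the
minimizer and compactness of the sphere). By compactness again, for `x` near `x₀` no point of
that sphere feasible at `x` is as good as `v`; but if `u*(x)` lay outside the sphere, the segment
from `v` to `u*(x)` would cross it at such a point, by convexity.

So the closed-loop field `x ↦ F(x, u*(x))` is continuous near `x₀` and Peano's theorem applies.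
Peano's theorem is proved with Tonelli's delayed approximations
`x_h(t) = x₀ + ∫₀ᵗ G(x_h(s ∓ h)) ds` (delay clamped at `0`): the delay makes them computable
by finitely many Picard steps, they are uniformly Lipschitz, and by Arzelà–Ascoli a subsequence
converges locally uniformly to a solution.
-/

open Set Filter Metric Topology
open scoped NNReal

lemma StrictConvexOn.lt_of_isMinOn {E : Type*} [AddCommMonoid E] [SMul ℝ E] {s : Set E}
    {g : E → ℝ} {u₀ w : E} (hg : StrictConvexOn ℝ s g) (hu₀ : u₀ ∈ s) (hmin : IsMinOn g s u₀)
    (hw : w ∈ s) (hne : w ≠ u₀) : g u₀ < g w := by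
  by_contra! hle
  exact hne (hg.eq_of_isMinOn (fun z hz => hle.trans (hmin hz)) hmin hw hu₀)

section ParametricConvexProgram

variable {X U ι : Type*}

def feasibleSet (c : ι → X × U → ℝ) (x : X) : Set U := {u | ∀ i, c i (x, u) ≤ 0}

variable [NormedAddCommGroup U] {f : X × U → ℝ} {c : ι → X × U → ℝ}

lemma isClosed_feasibleSet [TopologicalSpace X] (hc : ∀ i, Continuous (c i)) (x : X) :
    IsClosed (feasibleSet c x) := by
  simp only [feasibleSet, ofPred_forall]
  exact isClosed_iInter fun i => isClosed_le (by fun_prop) continuous_const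

lemma eventually_lt_on_feasible_sphere [TopologicalSpace X] [ProperSpace U] (hf : Continuous f)
    (hc : ∀ i, Continuous (c i)) {x₀ : X} {u₀ v : U} {ε : ℝ}
    (hv : ∀ w ∈ sphere u₀ ε, w ∈ feasibleSet c x₀ → f (x₀, v) < f (x₀, w)) :
    ∀ᶠ x in 𝓝 x₀, ∀ w ∈ sphere u₀ ε, w ∈ feasibleSet c x → f (x, v) < f (x, w) := by
  refine (isCompact_sphere u₀ ε).eventually_forall_of_forall_eventually fun w hw => ?_
  by_cases hwfeas : w ∈ feasibleSet c x₀
  · filter_upwards [ContinuousAt.eventually_lt (x₀ := (x₀, w)) (f := fun z => f (z.1, v))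
      (by fun_prop) (by fun_prop) (hv w hw hwfeas)] with z hz _ using hz
  · obtain ⟨i, hi⟩ : ∃ i, 0 < c i (x₀, w) := by simpa [feasibleSet] using hwfeas
    filter_upwards [continuousAt_const.eventually_lt (hc i).continuousAt hi] with z hz hzfeas
    exact absurd (hzfeas i) (not_le.2 hz)

variable [NormedSpace ℝ U]

lemma convex_feasibleSet {x : X} (hc : ∀ i, ConvexOn ℝ univ fun u => c i (x, u)) :
    Convex ℝ (feasibleSet c x) := by
  have : feasibleSet c x = ⋂ i, {u | u ∈ univ ∧ c i (x, u) ≤ 0} := by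
    ext; simp [feasibleSet]
  exact this ▸ convex_iInter fun i => (hc i).convex_le 0

variable [TopologicalSpace X] [ProperSpace U]

lemma exists_slater_point_lt_on_sphere (hf : Continuous f) (hc : ∀ i, Continuous (c i))
    {x₀ : X} (hstrict : StrictConvexOn ℝ univ fun u => f (x₀, u))
    (hcconv : ∀ i, ConvexOn ℝ univ fun u => c i (x₀, u))
    {u₀ : U} (hu₀ : u₀ ∈ feasibleSet c x₀)
    (hmin : IsMinOn (fun u => f (x₀, u)) (feasibleSet c x₀) u₀)
    {û : U} (hû : ∀ i, c i (x₀, û) < 0) {ε : ℝ} (hε : 0 < ε) :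
    ∃ v ∈ ball u₀ ε, (∀ i, c i (x₀, v) < 0) ∧
      ∀ w ∈ sphere u₀ ε, w ∈ feasibleSet c x₀ → f (x₀, v) < f (x₀, w) := by
  set v : ℝ → U := ⇑(AffineMap.lineMap (k := ℝ) u₀ û)
  have hv : Continuous v := AffineMap.lineMap_continuous
  have hv0 : v 0 = u₀ := AffineMap.lineMap_apply_zero _ _
  have hK : IsCompact (sphere u₀ ε ∩ feasibleSet c x₀) :=
    (isCompact_sphere u₀ ε).inter_right (isClosed_feasibleSet hc x₀)
  have hlt : ∀ᶠ t in 𝓝 0, ∀ w ∈ sphere u₀ ε ∩ feasibleSet c x₀, f (x₀, v t) < f (x₀, w) := by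
    refine hK.eventually_forall_of_forall_eventually fun w ⟨hwε, hw⟩ => ?_
    have hne : w ≠ u₀ := ne_of_mem_sphere hwε hε.ne'
    refine ContinuousAt.eventually_lt (by fun_prop) (by fun_prop) ?_
    simpa only [hv0] using (hstrict.subset (subset_univ _)
      (convex_feasibleSet hcconv)).lt_of_isMinOn hu₀ hmin hw hne
  have hball : ∀ᶠ t in 𝓝 0, v t ∈ ball u₀ ε :=
    hv.continuousAt.preimage_mem_nhds (hv0 ▸ ball_mem_nhds u₀ hε)
  have hslater : ∀ᶠ t in 𝓝[>] 0, ∀ i, c i (x₀, v t) < 0 := by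
    filter_upwards [Ioo_mem_nhdsGT one_pos] with t ⟨ht0, ht1⟩ i
    have hconv := (hcconv i).2 (mem_univ u₀) (mem_univ û) (sub_nonneg.2 ht1.le) ht0.le
      (sub_add_cancel 1 t)
    rw [← AffineMap.lineMap_apply_module] at hconv
    simp only [smul_eq_mul] at hconv
    exact hconv.trans_lt (add_neg_of_nonpos_of_neg
      (mul_nonpos_of_nonneg_of_nonpos (sub_nonneg.2 ht1.le) (hu₀ i))
      (mul_neg_of_pos_of_neg ht0 (hû i)))
  obtain ⟨t, ⟨htlt, htball⟩, htslater⟩ :=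
    ((hlt.and hball).filter_mono nhdsWithin_le_nhds).and hslater |>.exists
  exact ⟨v t, htball, htslater, fun w hwε hw => htlt w ⟨hwε, hw⟩⟩

theorem continuousAt_of_isMinOn_feasibleSet [Finite ι] {φ : X → U} (hf : Continuous f)
    (hc : ∀ i, Continuous (c i)) (hfconv : ∀ x, ConvexOn ℝ univ fun u => f (x, u))
    (hcconv : ∀ x i, ConvexOn ℝ univ fun u => c i (x, u))
    (hmin : ∀ x, φ x ∈ feasibleSet c x ∧ IsMinOn (fun u => f (x, u)) (feasibleSet c x) (φ x))
    {x₀ : X} (hstrict : StrictConvexOn ℝ univ fun u => f (x₀, u))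
    (hslater : ∃ û, ∀ i, c i (x₀, û) < 0) : ContinuousAt φ x₀ := by
  obtain ⟨û, hû⟩ := hslater
  refine Metric.tendsto_nhds.2 fun ε hε => ?_
  obtain ⟨v, hvball, hvslater, hvlt⟩ := exists_slater_point_lt_on_sphere hf hc hstrict
    (hcconv x₀) (hmin x₀).1 (hmin x₀).2 hû hε
  have hvfeas : ∀ᶠ x in 𝓝 x₀, v ∈ feasibleSet c x := by
    filter_upwards [eventually_all.2 fun i => ContinuousAt.eventually_lt
      (f := fun x => c i (x, v)) (by fun_prop) continuousAt_const (hvslater i)] with x hx i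
    exact (hx i).le
  filter_upwards [eventually_lt_on_feasible_sphere hf hc hvlt, hvfeas] with x hx hxv
  by_contra! hfar
  obtain ⟨w, hwseg, hwε⟩ : ∃ w ∈ segment ℝ v (φ x), dist w (φ x₀) = ε :=
    (convex_segment v (φ x)).isPreconnected.intermediate_value (left_mem_segment ℝ v (φ x))
      (right_mem_segment ℝ v (φ x)) (continuous_id.dist continuous_const).continuousOn
      ⟨(mem_ball.1 hvball).le, hfar⟩
  have hwfeas : w ∈ feasibleSet c x :=
    (convex_feasibleSet (hcconv x)).segment_subset hxv (hmin x).1 hwseg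
  have hwle : f (x, w) ≤ f (x, v) :=
    ((hfconv x).le_on_segment (mem_univ _) (mem_univ _) hwseg).trans
      (max_le le_rfl ((hmin x).2 hxv))
  exact (hx w hwε hwfeas).not_ge hwle

end ParametricConvexProgram

section Peano

lemma isCompact_setOf_lipschitzWith {X E : Type*} [PseudoMetricSpace X] [MetricSpace E]
    [ProperSpace E] (K : ℝ≥0) (a : X) (b : E) :
    IsCompact {u : C(X, E) | LipschitzWith K u ∧ u a = b} := by
  refine ArzelaAscoli.isCompact_of_equicontinuous _ ?_
    (LipschitzWith.uniformEquicontinuous _ K fun u => u.2.1).equicontinuous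
  have himage : ContinuousMap.toFun '' {u : C(X, E) | LipschitzWith K u ∧ u a = b} =
      {u : X → E | LipschitzWith K u ∧ u a = b} := by
    ext u
    exact ⟨by rintro ⟨u, hu, rfl⟩; exact hu, fun hu => ⟨⟨u, hu.1.continuous⟩, hu, rfl⟩⟩
  rw [himage]
  refine (isCompact_univ_pi fun x => isCompact_closedBall b (K * dist x a)).of_isClosed_subset
    ((isClosed_setOfPred_lipschitzWith K).inter (isClosed_eq (continuous_apply a)
      continuous_const)) fun u ⟨hu, hua⟩ x _ => ?_
  rw [mem_closedBall, ← hua]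
  exact hu.dist_le_mul x a

/-- `lag h s` moves `s` towards `0` by `h`, stopping at `0`. -/
def lag (h s : ℝ) : ℝ := max (s - h) 0 + min (s + h) 0

lemma continuous_lag : Continuous fun p : ℝ × ℝ => lag p.1 p.2 := by
  unfold lag; fun_prop

lemma lag_zero (s : ℝ) : lag 0 s = s := by
  simp [lag, add_comm (max s 0), min_add_max]

lemma abs_lag_le {h a s : ℝ} (hh : 0 ≤ h) (ha : 0 ≤ a) (hs : |s| ≤ a + h) : |lag h s| ≤ a := by
  rw [abs_le] at hs ⊢
  unfold lag
  rcases le_total 0 s with hs0 | hs0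
  · rw [min_eq_right (by linarith), add_zero]
    exact ⟨by linarith [le_max_right (s - h) 0], max_le (by linarith) ha⟩
  · rw [max_eq_right (by linarith), zero_add]
    exact ⟨le_min (by linarith) (by linarith), by linarith [min_le_right (s + h) 0]⟩

variable {E : Type*} [NormedAddCommGroup E] [NormedSpace ℝ E]

noncomputable def tonelliStep (G : E → E) (x₀ : E) (h : ℝ) (y : ℝ → E) (t : ℝ) : E :=
  x₀ + ∫ s in 0..t, G (y (lag h s))

variable {G : E → E} {x₀ : E} {h : ℝ}

@[simp] lemma tonelliStep_zero (y : ℝ → E) : tonelliStep G x₀ h y 0 = x₀ := by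
  simp [tonelliStep]

lemma lipschitzWith_tonelliStep {C : ℝ≥0} (hG : Continuous G) (hC : ∀ z, ‖G z‖ ≤ C)
    {y : ℝ → E} (hy : Continuous y) : LipschitzWith C (tonelliStep G x₀ h y) := by
  have hint : Continuous fun s => G (y (lag h s)) :=
    hG.comp (hy.comp (continuous_lag.comp (continuous_const.prodMk continuous_id)))
  refine LipschitzWith.of_dist_le_mul fun t t' => ?_
  rw [dist_eq_norm, tonelliStep, tonelliStep, add_sub_add_left_eq_sub,
    intervalIntegral.integral_interval_sub_left (hint.intervalIntegrable _ _)
      (hint.intervalIntegrable _ _), Real.dist_eq]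
  exact intervalIntegral.norm_integral_le_of_norm_le_const fun s _ => hC _

lemma tonelliStep_eq_of_eqOn {y₁ y₂ : ℝ → E} {a : ℝ} (hh : 0 ≤ h) (ha : 0 ≤ a)
    (hy : ∀ τ, |τ| ≤ a → y₁ τ = y₂ τ) {t : ℝ} (ht : |t| ≤ a + h) :
    tonelliStep G x₀ h y₁ t = tonelliStep G x₀ h y₂ t := by
  refine congrArg (x₀ + ·) (intervalIntegral.integral_congr fun s hs => ?_)
  have hst : |s| ≤ |t| := by simpa using abs_sub_left_of_mem_uIcc hs
  simp only [hy _ (abs_lag_le hh ha (hst.trans ht))]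

lemma iterate_tonelliStep_succ_eq (hh : 0 ≤ h) (j : ℕ) {t : ℝ} (ht : |t| ≤ j * h) :
    (tonelliStep G x₀ h)^[j + 1] (fun _ => x₀) t = (tonelliStep G x₀ h)^[j] (fun _ => x₀) t := by
  induction j generalizing t with
  | zero =>
    obtain rfl : t = 0 := abs_nonpos_iff.1 (by simpa using ht)
    simp
  | succ j ih =>
    simp only [Function.iterate_succ_apply'] at ih ⊢
    exact tonelliStep_eq_of_eqOn hh (by positivity) (fun τ hτ => ih hτ)
      (by push_cast at ht; linarith)

lemma exists_lipschitzWith_tonelliStep_fixed {C : ℝ≥0} (hG : Continuous G)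
    (hC : ∀ z, ‖G z‖ ≤ C) (x₀ : E) (hh : 0 < h) (T : ℝ) :
    ∃ w : ℝ → E, LipschitzWith C w ∧ w 0 = x₀ ∧ ∀ t, |t| ≤ T → w t = tonelliStep G x₀ h w t := by
  set y : ℕ → ℝ → E := fun j => (tonelliStep G x₀ h)^[j] (fun _ => x₀)
  have hy : ∀ j, Continuous (y j) := fun j => by
    induction j with
    | zero => exact continuous_const
    | succ j ih =>
      simp only [y, Function.iterate_succ_apply'] at ih ⊢
      exact (lipschitzWith_tonelliStep hG hC ih).continuous
  obtain ⟨N, hN⟩ := exists_nat_ge (T / h)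
  refine ⟨y (N + 1), ?_, ?_, fun t ht => ?_⟩
  · simp only [y, Function.iterate_succ_apply']
    exact lipschitzWith_tonelliStep hG hC (hy N)
  · simp only [y, Function.iterate_succ_apply', tonelliStep_zero]
  · have hTN : T ≤ ((N + 1 : ℕ) : ℝ) * h := by
      push_cast; linarith [(div_le_iff₀ hh).1 hN]
    simp only [y]
    rw [← iterate_tonelliStep_succ_eq hh.le (N + 1) (ht.trans hTN),
      Function.iterate_succ_apply' _ (N + 1)]

lemma tendsto_tonelliStep {ι : Type*} {l : Filter ι} [l.IsCountablyGenerated] [CompleteSpace E]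
    {C : ℝ≥0} (hG : Continuous G) (hC : ∀ z, ‖G z‖ ≤ C) {h : ι → ℝ} (hh : Tendsto h l (𝓝 0))
    {w : ι → ℝ → E} {x : ℝ → E} (hw : ∀ k, Continuous (w k)) (hwx : TendstoLocallyUniformly w x l)
    (hx : Continuous x) (t : ℝ) :
    Tendsto (fun k => tonelliStep G x₀ (h k) (w k) t) l (𝓝 (x₀ + ∫ s in 0..t, G (x s))) := by
  refine tendsto_const_nhds.add (intervalIntegral.tendsto_integral_filter_of_dominated_convergence
    (fun _ => C) (Eventually.of_forall fun k => ?_) (Eventually.of_forall fun k =>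
      MeasureTheory.ae_of_all _ fun s _ => hC _) intervalIntegrable_const
    (MeasureTheory.ae_of_all _ fun s _ => ?_))
  · exact (hG.comp ((hw k).comp (continuous_lag.comp (continuous_const.prodMk continuous_id))))
      |>.aestronglyMeasurable
  · have hlag : Tendsto (fun k => lag (h k) s) l (𝓝 s) := by
      have := (continuous_lag.tendsto (0, s)).comp (hh.prodMk_nhds tendsto_const_nhds)
      rwa [lag_zero] at this
    exact (hG.tendsto _).comp (hwx.tendsto_comp hx.continuousAt hlag)

theorem exists_lipschitzWith_forall_hasDerivAt [ProperSpace E] {C : ℝ≥0} (hG : Continuous G)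
    (hC : ∀ z, ‖G z‖ ≤ C) (x₀ : E) :
    ∃ x : ℝ → E, LipschitzWith C x ∧ x 0 = x₀ ∧ ∀ t, HasDerivAt x (G (x t)) t := by
  choose w hwlip hw0 hwfix using fun k : ℕ =>
    exists_lipschitzWith_tonelliStep_fixed hG hC x₀ (Nat.one_div_pos_of_nat (n := k)) k
  obtain ⟨x, ⟨hxlip, hx0⟩, φ, hφ, hlim⟩ := (isCompact_setOf_lipschitzWith C 0 x₀).tendsto_subseq
    (x := fun k => (⟨w k, (hwlip k).continuous⟩ : C(ℝ, E))) fun k => ⟨hwlip k, hw0 k⟩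
  have hloc := ContinuousMap.tendsto_iff_tendstoLocallyUniformly.1 hlim
  have hint : ∀ t, x t = x₀ + ∫ s in 0..t, G (x s) := fun t => by
    refine tendsto_nhds_unique (hloc.tendsto_comp x.continuous.continuousAt tendsto_const_nhds)
      ((tendsto_tonelliStep hG hC (tendsto_one_div_add_atTop_nhds_zero_nat.comp hφ.tendsto_atTop)
        (fun j => (hwlip (φ j)).continuous) hloc x.continuous t).congr' ?_)
    filter_upwards [(tendsto_natCast_atTop_atTop.comp hφ.tendsto_atTop).eventually_ge_atTop |t|]
      with j hj using (hwfix (φ j) t hj).symm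
  refine ⟨x, hxlip, hx0, fun t => ?_⟩
  exact (((hG.comp x.continuous).integral_hasStrictDerivAt 0 t).hasDerivAt.const_add x₀)
    |>.congr_of_eventuallyEq (Eventually.of_forall hint)

noncomputable def closedBallRetraction (x₀ : E) (R : ℝ) (y : E) : E :=
  x₀ + (R / max R ‖y - x₀‖) • (y - x₀)

lemma continuous_closedBallRetraction {R : ℝ} (hR : 0 < R) :
    Continuous (closedBallRetraction x₀ R) :=
  continuous_const.add ((continuous_const.div (by fun_prop)
    fun _ => (lt_max_of_lt_left hR).ne').smul (by fun_prop))

lemma closedBallRetraction_mem {R : ℝ} (hR : 0 < R) (y : E) :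
    closedBallRetraction x₀ R y ∈ closedBall x₀ R := by
  have hM : 0 < max R ‖y - x₀‖ := lt_max_of_lt_left hR
  rw [mem_closedBall, dist_eq_norm, closedBallRetraction, add_sub_cancel_left, norm_smul,
    Real.norm_of_nonneg (by positivity), div_mul_eq_mul_div, div_le_iff₀ hM]
  exact mul_le_mul_of_nonneg_left (le_max_right _ _) hR.le

lemma closedBallRetraction_of_mem {y : E} {R : ℝ} (hR : 0 < R) (hy : y ∈ closedBall x₀ R) :
    closedBallRetraction x₀ R y = y := by
  rw [mem_closedBall, dist_eq_norm] at hy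
  rw [closedBallRetraction, max_eq_left hy, div_self hR.ne', one_smul, add_sub_cancel]

theorem exists_hasDerivAt_of_continuousOn_closedBall [ProperSpace E] {R : ℝ} (hR : 0 < R)
    (hG : ContinuousOn G (closedBall x₀ R)) :
    ∃ δ : ℝ, 0 < δ ∧ ∃ x : ℝ → E, x 0 = x₀ ∧ ∀ t ∈ Ioo (-δ) δ, HasDerivAt x (G (x t)) t := by
  obtain ⟨C, hC⟩ := (isCompact_closedBall x₀ R).exists_bound_of_continuousOn hG
  have hGr : Continuous (G ∘ closedBallRetraction x₀ R) :=
    hG.comp_continuous (continuous_closedBallRetraction hR) (closedBallRetraction_mem hR)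
  obtain ⟨x, hxlip, hx0, hx⟩ := exists_lipschitzWith_forall_hasDerivAt hGr (C := C.toNNReal)
    (fun z => (hC _ (closedBallRetraction_mem hR z)).trans (Real.le_coe_toNNReal C)) x₀
  refine ⟨R / (C.toNNReal + 1), by positivity, x, hx0, fun t ht => ?_⟩
  have hxt : x t ∈ closedBall x₀ R := by
    have ht' : |t| ≤ R / (C.toNNReal + 1) := abs_le.2 ⟨ht.1.le, ht.2.le⟩
    rw [mem_closedBall, ← hx0]
    calc dist (x t) (x 0) ≤ C.toNNReal * |t| := by simpa using hxlip.dist_le_mul t 0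
      _ ≤ (C.toNNReal + 1) * (R / (C.toNNReal + 1)) := by gcongr; linarith
      _ = R := mul_div_cancel₀ _ (by positivity)
  simpa only [Function.comp_apply, closedBallRetraction_of_mem hR hxt] using hx t

end Peano

theorem stmt_6_general {n m p : ℕ}
    (f : EuclideanSpace ℝ (Fin n) × EuclideanSpace ℝ (Fin m) → ℝ)
    (g : EuclideanSpace ℝ (Fin n) × EuclideanSpace ℝ (Fin m) → EuclideanSpace ℝ (Fin p))
    (ustar : EuclideanSpace ℝ (Fin n) → EuclideanSpace ℝ (Fin m))
    (F : EuclideanSpace ℝ (Fin n) × EuclideanSpace ℝ (Fin m) → EuclideanSpace ℝ (Fin n))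
    (hf : Continuous f) (hg : Continuous g)
    (hstrict : ∀ x, StrictConvexOn ℝ univ fun u => f (x, u))
    (hgconv : ∀ x (i : Fin p), ConvexOn ℝ univ fun u => g (x, u) i)
    (hmin : ∀ x, (∀ i, g (x, ustar x) i ≤ 0) ∧
      ∀ u, (∀ i, g (x, u) i ≤ 0) → f (x, ustar x) ≤ f (x, u))
    (x₀ : EuclideanSpace ℝ (Fin n))
    (hslater : ∃ uhat, ∀ i, g (x₀, uhat) i < 0)
    (hF : LocallyLipschitz F) :
    ∃ δ₀ : ℝ, 0 < δ₀ ∧ ∃ x : ℝ → EuclideanSpace ℝ (Fin n), x 0 = x₀ ∧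
      ∀ t ∈ Ioo (-δ₀) δ₀, HasDerivAt x (F (x t, ustar (x t))) t := by
  obtain ⟨û, hû⟩ := hslater
  have hgc : ∀ i, Continuous fun q => g q i := fun i => by fun_prop
  obtain ⟨R, hR, hslaterR⟩ : ∃ R > 0, ∀ y ∈ closedBall x₀ R, ∀ i, g (y, û) i < 0 :=
    nhds_basis_closedBall.eventually_iff.1 <| eventually_all.2 fun i =>
      ContinuousAt.eventually_lt (f := fun y => g (y, û) i) (by fun_prop) continuousAt_const (hû i)
  have hustar : ∀ y ∈ closedBall x₀ R, ContinuousAt ustar y := fun y hy =>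
    continuousAt_of_isMinOn_feasibleSet (c := fun i q => g q i) hf hgc
      (fun x => (hstrict x).convexOn) hgconv
      (fun x => ⟨(hmin x).1, isMinOn_iff.2 (hmin x).2⟩) (hstrict y) ⟨û, hslaterR y hy⟩
  exact exists_hasDerivAt_of_continuousOn_closedBall hR fun y hy =>
    (hF.continuous.continuousAt.comp (continuousAt_id.prodMk (hustar y hy))).continuousWithinAt

/-- Existence of classical solutions for the closed-loop system. The data
`f, g` are continuous, of class `C^{0,2}` (i.e., `u ↦ f(x,u)`, `u ↦ g(x,u)` are twice
continuously differentiable and the partial derivatives in `u` up to order two are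
continuous jointly in `(x,u)`), `f(x,·)` is strictly convex, each `g_i(x,·)` is convex,
and `P(x)` has a (unique) minimizer `u*(x)` for every `x`. If Slater's condition holds
at `x₀` and `F` is locally Lipschitz, then there exist `δ₀ > 0` and a solution
`x : (−δ₀, δ₀) → ℝ^n` of `ẋ = F(x, u*(x))` with `x(0) = x₀`. -/
theorem stmt_6 {n m p : ℕ}
    (f : EuclideanSpace ℝ (Fin n) × EuclideanSpace ℝ (Fin m) → ℝ)
    (g : EuclideanSpace ℝ (Fin n) × EuclideanSpace ℝ (Fin m) → EuclideanSpace ℝ (Fin p))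
    (ustar : EuclideanSpace ℝ (Fin n) → EuclideanSpace ℝ (Fin m))
    (F : EuclideanSpace ℝ (Fin n) × EuclideanSpace ℝ (Fin m) → EuclideanSpace ℝ (Fin n))
    (hf : Continuous f) (hg : Continuous g)
    (hfu : ∀ x, ContDiff ℝ 2 fun u => f (x, u))
    (hgu : ∀ x, ContDiff ℝ 2 fun u => g (x, u))
    (hfu1 : Continuous fun q : EuclideanSpace ℝ (Fin n) × EuclideanSpace ℝ (Fin m) =>
      iteratedFDeriv ℝ 1 (fun u => f (q.1, u)) q.2)
    (hfu2 : Continuous fun q : EuclideanSpace ℝ (Fin n) × EuclideanSpace ℝ (Fin m) =>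
      iteratedFDeriv ℝ 2 (fun u => f (q.1, u)) q.2)
    (hgu1 : Continuous fun q : EuclideanSpace ℝ (Fin n) × EuclideanSpace ℝ (Fin m) =>
      iteratedFDeriv ℝ 1 (fun u => g (q.1, u)) q.2)
    (hgu2 : Continuous fun q : EuclideanSpace ℝ (Fin n) × EuclideanSpace ℝ (Fin m) =>
      iteratedFDeriv ℝ 2 (fun u => g (q.1, u)) q.2)
    (hstrict : ∀ x, StrictConvexOn ℝ univ fun u => f (x, u))
    (hgconv : ∀ x (i : Fin p), ConvexOn ℝ univ fun u => g (x, u) i)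
    (hmin : ∀ x, (∀ i, g (x, ustar x) i ≤ 0) ∧
      ∀ u, (∀ i, g (x, u) i ≤ 0) → f (x, ustar x) ≤ f (x, u))
    (x₀ : EuclideanSpace ℝ (Fin n))
    (hslater : ∃ uhat, ∀ i, g (x₀, uhat) i < 0)
    (hF : LocallyLipschitz F) :
    ∃ δ₀ : ℝ, 0 < δ₀ ∧ ∃ x : ℝ → EuclideanSpace ℝ (Fin n), x 0 = x₀ ∧
      ∀ t ∈ Ioo (-δ₀) δ₀, HasDerivAt x (F (x t, ustar (x t))) t :=
  stmt_6_general f g ustar F hf hg hstrict hgconv hmin x₀ hslater hF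
end

section
/- Define u₄ : ℝ² → ℝ by u₄(x₁,x₂) = 0 if x₂ ≤ 0; u₄(x₁,x₂) = x₂/x₁ if x₂ ≥ 0, x₁ ≠ 0 and x₁²/2 ≥ x₂; and u₄(x₁,x₂) = x₁(x₂+1)/(x₁²+2) otherwise. Then u₄ is not locally Lipschitz at the origin: for every neighborhood U of (0,0) and every L ≥ 0 there exist points x, y ∈ U with |u₄(x) − u₄(y)| > L‖x − y‖. In particular, for p(s) = (s, s²/2) and q(s) = (s, 0) with s > 0, one has |u₄(p(s)) − u₄(q(s))| / ‖p(s) − q(s)‖ = 1/s. -/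
/-! Along `p(s) = (s, s²/2)` and `q(s) = (s, 0)`, which both tend to the origin, `u₄` jumps by
`s/2` across a vertical distance `s²/2`, so the difference quotient `1/s` is unbounded. -/

open Set Filter

/-- The fourth component of the parametric optimizer of Robinson's counterexample. -/
noncomputable def u4 (x : ℝ × ℝ) : ℝ :=
  if x.2 ≤ 0 then 0
  else if 0 ≤ x.2 ∧ x.1 ≠ 0 ∧ x.2 ≤ x.1 ^ 2 / 2 then x.2 / x.1
  else x.1 * (x.2 + 1) / (x.1 ^ 2 + 2)

open Topology

lemma exists_mul_norm_sub_lt_abs_sub_of_tendsto {ι E : Type*} [SeminormedAddCommGroup E]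
    {l : Filter ι} [l.NeBot] {f : E → ℝ} {x₀ : E} {p q : ι → E}
    (hp : Tendsto p l (𝓝 x₀)) (hq : Tendsto q l (𝓝 x₀))
    (hquot : Tendsto (fun i ↦ |f (p i) - f (q i)| / ‖p i - q i‖) l atTop)
    {U : Set E} (hU : U ∈ 𝓝 x₀) (L : ℝ) :
    ∃ x ∈ U, ∃ y ∈ U, L * ‖x - y‖ < |f x - f y| := by
  obtain ⟨i, hpU, hqU, hL, hpos⟩ := ((hp.eventually_mem hU).and <| (hq.eventually_mem hU).and <|
    (hquot.eventually_gt_atTop L).and (hquot.eventually_gt_atTop 0)).exists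
  -- a positive quotient forces a nonzero denominator, since `a / 0 = 0`
  have hdist : 0 < ‖p i - q i‖ :=
    (norm_nonneg _).lt_of_ne fun h ↦ by rw [← h, div_zero] at hpos; exact hpos.false
  exact ⟨p i, hpU, q i, hqU, (lt_div_iff₀ hdist).1 hL⟩

lemma u4_parabola {s : ℝ} (hs : 0 < s) : u4 (s, s ^ 2 / 2) = s / 2 := by
  have hpos : ¬ s ^ 2 / 2 ≤ 0 := not_le.2 (by positivity)
  rw [u4, if_neg hpos, if_pos ⟨by positivity, hs.ne', le_rfl⟩]
  field_simp

lemma u4_of_snd_eq_zero (s : ℝ) : u4 (s, 0) = 0 := by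
  rw [u4, if_pos le_rfl]

lemma norm_parabola_sub_axis (s : ℝ) :
    ‖((s, s ^ 2 / 2) : ℝ × ℝ) - (s, 0)‖ = s ^ 2 / 2 := by
  have hnonneg : 0 ≤ s ^ 2 / 2 := by positivity
  rw [Prod.mk_sub_mk, sub_self, sub_zero, Prod.norm_def, norm_zero, Real.norm_of_nonneg hnonneg,
    max_eq_right hnonneg]

lemma u4_slope_parabola_axis {s : ℝ} (hs : 0 < s) :
    |u4 (s, s ^ 2 / 2) - u4 (s, 0)| / ‖((s, s ^ 2 / 2) : ℝ × ℝ) - (s, 0)‖ = 1 / s := by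
  rw [norm_parabola_sub_axis, u4_parabola hs, u4_of_snd_eq_zero, sub_zero,
    abs_of_pos (half_pos hs)]
  field_simp

/-- `u₄` is not locally Lipschitz at the origin; in particular, for
`p(s) = (s, s²/2)` and `q(s) = (s, 0)` with `s > 0`, the difference quotient equals `1/s`. -/
theorem stmt_10 :
    (∀ U ∈ nhds ((0, 0) : ℝ × ℝ), ∀ L : ℝ, 0 ≤ L →
      ∃ x ∈ U, ∃ y ∈ U, L * ‖x - y‖ < |u4 x - u4 y|) ∧
    (∀ s : ℝ, 0 < s →
      |u4 (s, s ^ 2 / 2) - u4 (s, 0)| / ‖((s, s ^ 2 / 2) : ℝ × ℝ) - (s, 0)‖ = 1 / s) := by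
  refine ⟨fun U hU L _ ↦ ?_, fun s hs ↦ u4_slope_parabola_axis hs⟩
  have hp : Tendsto (fun s : ℝ ↦ ((s, s ^ 2 / 2) : ℝ × ℝ)) (𝓝[>] 0) (𝓝 (0, 0)) := by
    have hcont : Continuous fun s : ℝ ↦ ((s, s ^ 2 / 2) : ℝ × ℝ) := by fun_prop
    exact (hcont.tendsto' 0 (0, 0) (by simp)).mono_left nhdsWithin_le_nhds
  have hq : Tendsto (fun s : ℝ ↦ ((s, 0) : ℝ × ℝ)) (𝓝[>] 0) (𝓝 (0, 0)) := by
    have hcont : Continuous fun s : ℝ ↦ ((s, 0) : ℝ × ℝ) := by fun_prop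
    exact (hcont.tendsto' 0 (0, 0) rfl).mono_left nhdsWithin_le_nhds
  have hquot : Tendsto (fun s : ℝ ↦ |u4 (s, s ^ 2 / 2) - u4 (s, 0)| /
      ‖((s, s ^ 2 / 2) : ℝ × ℝ) - (s, 0)‖) (𝓝[>] 0) atTop := by
    refine tendsto_inv_nhdsGT_zero.congr' ?_
    filter_upwards [self_mem_nhdsWithin] with s hs
    rw [u4_slope_parabola_axis hs, one_div]
  exact exists_mul_norm_sub_lt_abs_sub_of_tendsto hp hq hquot hU L
end

section
/- Define u₄ : ℝ² → ℝ by u₄(x₁,x₂) = 0 if x₂ ≤ 0; u₄(x₁,x₂) = x₂/x₁ if x₂ ≥ 0, x₁ ≠ 0 and x₁²/2 ≥ x₂; and u₄(x₁,x₂) = x₁(x₂+1)/(x₁²+2) otherwise. Then u₄ is continuous at the origin and, moreover, point-Lipschitz at the origin. -/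
open Set Filter

/-! On each of the three pieces `|u₄ x|` is at most `|x₁|`, as long as `|x₂| ≤ 1`: on the middle
piece because `x₂ ≤ x₁² / 2` gives `|x₂ / x₁| ≤ |x₁| / 2`, on the last one because
`|x₂ + 1| ≤ 2 ≤ x₁² + 2`. Hence `|u₄ x| ≤ ‖x‖` on the closed unit ball, which is point-Lipschitz
continuity at the origin with constant `1`, and continuity follows. -/

theorem ContinuousAt.of_eventually_norm_sub_le {E F : Type*} [SeminormedAddCommGroup E]
    [SeminormedAddCommGroup F] {f : E → F} {x₀ : E} {L : ℝ}
    (h : ∀ᶠ x in nhds x₀, ‖f x - f x₀‖ ≤ L * ‖x - x₀‖) : ContinuousAt f x₀ := by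
  rw [ContinuousAt, tendsto_iff_norm_sub_tendsto_zero]
  refine squeeze_zero' (Eventually.of_forall fun _ ↦ norm_nonneg _) h ?_
  simpa using (tendsto_norm_sub_self x₀).const_mul L

lemma abs_div_le_half_abs_of_le_sq_div_two {a b : ℝ} (hb : 0 ≤ b) (hab : b ≤ a ^ 2 / 2) :
    |b / a| ≤ |a| / 2 := by
  rcases eq_or_ne a 0 with rfl | ha
  · simp
  rw [abs_div, abs_of_nonneg hb, div_le_iff₀ (abs_pos.mpr ha)]
  nlinarith [sq_abs a]

lemma abs_mul_add_one_div_sq_add_two_le {a b : ℝ} (hb : |b| ≤ 1) :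
    |a * (b + 1) / (a ^ 2 + 2)| ≤ |a| := by
  have hb1 : |b + 1| ≤ 2 := (abs_add_le b 1).trans (by norm_num; linarith)
  rw [abs_div, abs_of_pos (by positivity : (0 : ℝ) < a ^ 2 + 2), div_le_iff₀ (by positivity),
    abs_mul]
  nlinarith [abs_nonneg a, sq_nonneg a]

lemma u4_zero : u4 (0, 0) = 0 := by simp [u4]

lemma abs_u4_le_norm {x : ℝ × ℝ} (hx : ‖x‖ ≤ 1) : |u4 x| ≤ ‖x‖ := by
  have h₁ : |x.1| ≤ ‖x‖ := norm_fst_le x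
  unfold u4
  split_ifs with h₂ h
  · simp
  · linarith [abs_div_le_half_abs_of_le_sq_div_two h.1 h.2.2, abs_nonneg x.1]
  · exact (abs_mul_add_one_div_sq_add_two_le ((norm_snd_le x).trans hx)).trans h₁

/-- `u₄` is continuous at the origin and point-Lipschitz at the origin. -/
theorem stmt_11 :
    ContinuousAt u4 (0, 0) ∧
    ∃ U ∈ nhds ((0, 0) : ℝ × ℝ), ∃ L : ℝ, 0 ≤ L ∧
      ∀ x ∈ U, |u4 x - u4 (0, 0)| ≤ L * ‖x - ((0, 0) : ℝ × ℝ)‖ := by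
  have lipschitz_at_zero : ∀ x ∈ Metric.closedBall ((0, 0) : ℝ × ℝ) 1,
      |u4 x - u4 (0, 0)| ≤ 1 * ‖x - ((0, 0) : ℝ × ℝ)‖ := by
    intro x hx
    rw [Prod.mk_zero_zero, mem_closedBall_zero_iff] at hx
    rw [u4_zero, sub_zero, one_mul, Prod.mk_zero_zero, sub_zero]
    exact abs_u4_le_norm hx
  have hU := Metric.closedBall_mem_nhds ((0, 0) : ℝ × ℝ) one_pos
  exact ⟨ContinuousAt.of_eventually_norm_sub_le (eventually_of_mem hU lipschitz_at_zero),
    _, hU, 1, zero_le_one, lipschitz_at_zero⟩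
end
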